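/- arXiv:1602.05082 — 6 statements merged into one kernel-verified Lean document; each statement's English description precedes it below -/
import Mathlib

section
/- Let B be a finite connected groupoid (nonempty, with any two objects isomorphic), let b be an object of B, let p : E ⥤ B be a functor of groupoids, and let F = (b ↓ p) be the homotopy fibre of p over b. Then E is a finite groupoid if and only if F is a finite groupoid, and in that case |E| = |F| · |B|; equivalently, |F| = |E| · #Aut(b). -/
open CategoryTheory

/-- Isomorphism classes of objects of a category. -/
abbrev IsoCls (C : Type*) [Category C] := Quotient (CategoryTheory.isIsomorphicSetoid C)

/-- A category is finite (as a homotopy type) if all hom-sets are finite and it has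
finitely many isomorphism classes of objects. -/
def FiniteCat (C : Type*) [Category C] : Prop :=
  (∀ x y : C, Finite (x ⟶ y)) ∧ Finite (IsoCls C)

/-- Homotopy cardinality: the sum over isomorphism classes of the reciprocal of the
order of the automorphism group. -/
noncomputable def gcard (C : Type*) [Category C] : ℚ :=
  ∑ᶠ X : IsoCls C, (Nat.card (Aut X.out) : ℚ)⁻¹

/-!
Sort the isomorphism classes of `b ↓ p` by their image in `E`. Those over `e` are the orbits of
`Aut e` acting on `b ⟶ p e` by postcomposition, and the automorphism group of `(e, φ)` is the
stabilizer of `φ`. By orbit–stabilizer the classes over `e` contribute `#(b ⟶ p e) / #Aut e`,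
which is `#Aut b / #Aut e` since `B` is a connected groupoid; summing gives `|F| = |E| · #Aut b`,
and `|B| = 1 / #Aut b`.
-/

open MulAction

attribute [local instance] isIsomorphicSetoid

theorem MulAction.finsum_inv_natCard_stabilizer (G X : Type*) [Group G] [MulAction G X]
    [Finite G] [Finite X] :
    ∑ᶠ ω : orbitRel.Quotient G X, (Nat.card (stabilizer G ω.out) : ℚ)⁻¹
      = Nat.card X / Nat.card G := by
  have hG : (Nat.card G : ℚ) ≠ 0 := Nat.cast_ne_zero.2 Nat.card_pos.ne'
  have hstab (x : X) :
      (Nat.card (stabilizer G x) : ℚ)⁻¹ = Nat.card (orbit G x) / Nat.card G := by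
    rw [eq_div_iff hG, ← (stabilizer G x).index_mul_card, Subgroup.index,
      ← Nat.card_congr (orbitEquivQuotientStabilizer G x), Nat.cast_mul]
    have : (Nat.card (stabilizer G x) : ℚ) ≠ 0 := Nat.cast_ne_zero.2 Nat.card_pos.ne'
    field_simp
  have := Fintype.ofFinite (orbitRel.Quotient G X)
  rw [finsum_eq_sum_of_fintype, Nat.card_congr (selfEquivSigmaOrbits G X), Nat.card_sigma]
  simp only [hstab, Nat.cast_sum, Finset.sum_div]

def IsoCls.map {C D : Type*} [Category C] [Category D] (F : C ⥤ D) : IsoCls C → IsoCls D :=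
  Quotient.map F.obj fun _ _ ⟨u⟩ => ⟨F.mapIso u⟩

theorem CategoryTheory.Iso.natCard_aut_eq {C : Type*} [Category C] {x y : C} (u : x ≅ y) :
    Nat.card (Aut x) = Nat.card (Aut y) :=
  Nat.card_congr u.conjAut.toEquiv

theorem IsoCls.natCard_aut_out_mk {C : Type*} [Category C] (x : C) :
    Nat.card (Aut (⟦x⟧ : IsoCls C).out) = Nat.card (Aut x) :=
  (Quotient.mk_out (s := isIsomorphicSetoid C) x).some.natCard_aut_eq

instance CategoryTheory.Aut.finite {C : Type*} [Category C] (x : C) [Finite (x ⟶ x)] :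
    Finite (Aut x) :=
  Finite.of_injective (fun u : Aut x => u.hom) fun _ _ => Aut.ext

theorem CategoryTheory.Groupoid.natCard_hom_eq_natCard_aut {C : Type*} [Groupoid C] {x y : C}
    (u : x ≅ y) : Nat.card (x ⟶ y) = Nat.card (Aut x) :=
  Nat.card_congr ((Iso.homCongr (Iso.refl x) u.symm).trans (Groupoid.isoEquivHom x x).symm)

theorem gcard_eq_inv_natCard_aut {C : Type*} [Category C] (hconn : ∀ x y : C, Nonempty (x ≅ y))
    (c : C) : gcard C = (Nat.card (Aut c) : ℚ)⁻¹ := by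
  have : Subsingleton (IsoCls C) :=
    ⟨Quotient.ind₂ fun x y => Quotient.sound (hconn x y)⟩
  have : Unique (IsoCls C) := uniqueOfSubsingleton ⟦c⟧
  rw [gcard, finsum_unique, Unique.default_eq ⟦c⟧, IsoCls.natCard_aut_out_mk]

namespace CategoryTheory.StructuredArrow

variable {E B : Type*} [Category E] [Category B] {b : B} {p : E ⥤ B}

instance mulActionAutHom (b : B) (p : E ⥤ B) (e : E) : MulAction (Aut e) (b ⟶ p.obj e) :=
  MulAction.compHom _ ((p.mapEnd e).comp (Aut.toEnd e))

theorem aut_smul_def {e : E} (g : Aut e) (φ : b ⟶ p.obj e) : g • φ = φ ≫ p.map g.hom := rfl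

def autMkEquivStabilizer {e : E} (φ : b ⟶ p.obj e) : Aut (mk φ) ≃ stabilizer (Aut e) φ where
  toFun u := ⟨(proj b p).mapIso u, mem_stabilizer_iff.2 ((aut_smul_def _ _).trans (w u.hom))⟩
  invFun g := isoMk g.1 g.2
  left_inv u := by ext; rfl
  right_inv g := by ext; rfl

theorem isoCls_mk_eq_mk_iff {e : E} (φ ψ : b ⟶ p.obj e) :
    (⟦mk φ⟧ : IsoCls (StructuredArrow b p)) = ⟦mk ψ⟧ ↔ φ ∈ orbit (Aut e) ψ := by
  rw [_root_.Quotient.eq, mem_orbit_iff]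
  constructor
  · rintro ⟨u⟩
    exact ⟨(proj b p).mapIso u.symm, (aut_smul_def _ _).trans (w u.inv)⟩
  · rintro ⟨g, rfl⟩
    exact ⟨(isoMk (f := mk ψ) (f' := mk (g • ψ)) g).symm⟩

variable (b p) in
noncomputable def orbitsEquivFiber (e : E) : orbitRel.Quotient (Aut e) (b ⟶ p.obj e) ≃
    {Y : IsoCls (StructuredArrow b p) // IsoCls.map (proj b p) Y = ⟦e⟧} :=
  Equiv.ofBijective
    (_root_.Quotient.lift (fun φ => ⟨⟦mk φ⟧, rfl⟩) fun φ ψ h =>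
      Subtype.ext ((isoCls_mk_eq_mk_iff φ ψ).2 h))
    ⟨_root_.Quotient.ind₂ fun φ ψ h =>
        _root_.Quotient.sound ((isoCls_mk_eq_mk_iff φ ψ).1 (congrArg Subtype.val h)),
      fun ⟨Y, hY⟩ => by
        induction Y using _root_.Quotient.ind with | _ A =>
        obtain ⟨u⟩ := _root_.Quotient.exact hY
        exact ⟨⟦A.hom ≫ p.map u.hom⟧,
          Subtype.ext (_root_.Quotient.sound ⟨(isoMk u).symm⟩)⟩⟩

theorem natCard_aut_orbitsEquivFiber {e : E}
    (ω : orbitRel.Quotient (Aut e) (b ⟶ p.obj e)) :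
    Nat.card (Aut (orbitsEquivFiber b p e ω).1.out) = Nat.card (stabilizer (Aut e) ω.out) := by
  conv_lhs => rw [← _root_.Quotient.out_eq ω]
  exact (IsoCls.natCard_aut_out_mk _).trans (Nat.card_congr (autMkEquivStabilizer _))

theorem finsum_fiber_inv_natCard_aut (e : E) [Finite (e ⟶ e)] [Finite (b ⟶ p.obj e)] :
    ∑ᶠ Y : {Y : IsoCls (StructuredArrow b p) // IsoCls.map (proj b p) Y = ⟦e⟧},
        (Nat.card (Aut Y.1.out) : ℚ)⁻¹
      = Nat.card (b ⟶ p.obj e) / Nat.card (Aut e) := by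
  rw [← finsum_comp_equiv (orbitsEquivFiber b p e), ← finsum_inv_natCard_stabilizer]
  simp only [natCard_aut_orbitsEquivFiber]

theorem finite_hom (hE : ∀ x y : E, Finite (x ⟶ y)) (A A' : StructuredArrow b p) :
    Finite (A ⟶ A') :=
  have := hE A.right A'.right
  Finite.of_injective (fun f => f.right) fun f g => hom_ext f g

variable (b p)

theorem finite_isoCls (hB : ∀ x y : B, Finite (x ⟶ y)) [Finite (IsoCls E)] :
    Finite (IsoCls (StructuredArrow b p)) := by
  have (X : IsoCls E) : Finite {Y // IsoCls.map (proj b p) Y = X} := by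
    induction X using _root_.Quotient.ind with | _ e =>
    have := hB b (p.obj e)
    exact Finite.of_equiv _ (orbitsEquivFiber b p e)
  exact Finite.of_equiv _ (Equiv.sigmaFiberEquiv (IsoCls.map (proj b p)))

theorem isoCls_map_proj_surjective (hb : ∀ e : E, Nonempty (b ⟶ p.obj e)) :
    Function.Surjective (IsoCls.map (proj b p)) :=
  _root_.Quotient.ind fun e => ⟨⟦mk (hb e).some⟧, rfl⟩

theorem finite_hom_of_finite_structuredArrow_hom (hb : ∀ e : E, Nonempty (b ⟶ p.obj e))
    (hB : ∀ x y : B, Finite (x ⟶ y)) (hF : ∀ A A' : StructuredArrow b p, Finite (A ⟶ A'))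
    (x y : E) : Finite (x ⟶ y) := by
  let φ := (hb x).some
  have := hB b (p.obj y)
  have (ψ : b ⟶ p.obj y) := hF (mk φ) (mk ψ)
  exact Finite.of_injective
    (fun f : x ⟶ y => (⟨φ ≫ p.map f, homMk f⟩ : Σ ψ, mk φ ⟶ mk ψ))
    fun _ _ h => congrArg (fun s => (s.2.right : x ⟶ y)) h

theorem finiteCat_iff (hb : ∀ e : E, Nonempty (b ⟶ p.obj e))
    (hB : ∀ x y : B, Finite (x ⟶ y)) :
    FiniteCat E ↔ FiniteCat (StructuredArrow b p) := by
  constructor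
  · rintro ⟨hE, _⟩
    exact ⟨finite_hom hE, finite_isoCls b p hB⟩
  · rintro ⟨hF, _⟩
    exact ⟨finite_hom_of_finite_structuredArrow_hom b p hb hB hF,
      Finite.of_surjective _ (isoCls_map_proj_surjective b p hb)⟩

end CategoryTheory.StructuredArrow

open StructuredArrow in
theorem gcard_structuredArrow_eq_mul_natCard_aut {E B : Type*} [Category E] [Groupoid B]
    (hconn : ∀ x y : B, Nonempty (x ≅ y)) (hB : ∀ x y : B, Finite (x ⟶ y))
    (b : B) (p : E ⥤ B) (hE : FiniteCat E) :
    gcard (StructuredArrow b p) = gcard E * Nat.card (Aut b) := by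
  classical
  obtain ⟨hE, _⟩ := hE
  have := finite_isoCls b p hB
  have := Fintype.ofFinite (IsoCls E)
  have := Fintype.ofFinite (IsoCls (StructuredArrow b p))
  rw [gcard, gcard, finsum_eq_sum_of_fintype, finsum_eq_sum_of_fintype,
    ← Fintype.sum_fiberwise (IsoCls.map (proj b p)), Finset.sum_mul]
  refine Fintype.sum_congr _ _ (Quotient.ind fun e => ?_)
  have := hE e e
  have := hB b (p.obj e)
  rw [← finsum_eq_sum_of_fintype, finsum_fiber_inv_natCard_aut,
    Groupoid.natCard_hom_eq_natCard_aut (hconn b (p.obj e)).some, IsoCls.natCard_aut_out_mk,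
    div_eq_inv_mul]

theorem fibre_sequence_card_general {E B : Type*} [Groupoid E] [Groupoid B]
    (hconn : ∀ x y : B, Nonempty (x ≅ y)) (hB : FiniteCat B)
    (b : B) (p : E ⥤ B) :
    (FiniteCat E ↔ FiniteCat (StructuredArrow b p)) ∧
    (FiniteCat E →
      gcard E = gcard (StructuredArrow b p) * gcard B ∧
      gcard (StructuredArrow b p) = gcard E * (Nat.card (Aut b) : ℚ)) := by
  have : Finite (b ⟶ b) := hB.1 b b
  have hAut : (Nat.card (Aut b) : ℚ) ≠ 0 := Nat.cast_ne_zero.2 Nat.card_pos.ne'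
  refine ⟨StructuredArrow.finiteCat_iff b p (fun e => (hconn b (p.obj e)).map Iso.hom) hB.1,
    fun hE => ?_⟩
  have key := gcard_structuredArrow_eq_mul_natCard_aut hconn hB.1 b p hE
  refine ⟨?_, key⟩
  rw [key, gcard_eq_inv_natCard_aut hconn b, mul_inv_cancel_right₀ hAut]

/-- Fibre sequence multiplicativity: for `B` a finite connected groupoid, `b : B`,
`p : E ⥤ B` with homotopy fibre `F = (b ↓ p)`, `E` is finite iff `F` is finite, and
in that case `|E| = |F| · |B|`, equivalently `|F| = |E| · #Aut(b)`. -/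
theorem fibre_sequence_card {E B : Type*} [Groupoid E] [Groupoid B]
    [Nonempty B] (hconn : ∀ x y : B, Nonempty (x ≅ y)) (hB : FiniteCat B)
    (b : B) (p : E ⥤ B) :
    (FiniteCat E ↔ FiniteCat (StructuredArrow b p)) ∧
    (FiniteCat E →
      gcard E = gcard (StructuredArrow b p) * gcard B ∧
      gcard (StructuredArrow b p) = gcard E * (Nat.card (Aut b) : ℚ)) :=
  fibre_sequence_card_general hconn hB b p
end

section
/- Let B be a locally finite groupoid, let X and Y be finite groupoids, and let F : X ⥤ B and G : Y ⥤ B be functors. Then the comma category Comma(F, G) (whose objects are triples (x, y, φ) with φ : F(x) → G(y) a morphism in B) is a finite groupoid, and its homotopy cardinality is |Comma(F, G)| = Σ_{[b]∈π₀B} |X_b| · |Y_b| / #Aut(b), where X_b = (b ↓ F) and Y_b = (b ↓ G) are the homotopy fibres over b and the sum ranges over the isomorphism classes of objects of B. -/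
open CategoryTheory

/-- A category is locally finite if all of its hom-sets are finite. -/
def LocallyFiniteCat (C : Type*) [Category C] : Prop := ∀ x y : C, Finite (x ⟶ y)

/-!
Over a pair of classes `([x], [y])`, two objects `(x, y, φ)` and `(x, y, φ')` of `Comma F G` are
isomorphic exactly when `φ` and `φ'` lie in the same orbit of `Aut x × Aut y` acting on
`F x ⟶ G y` by `F a⁻¹ ≫ φ ≫ G b`, and the automorphism group of `(x, y, φ)` is the stabiliser
of `φ`. Orbit–stabiliser then gives `|Comma F G| = Σ_{[x],[y]} #(F x ⟶ G y) / (#Aut x · #Aut y)`.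
A structured arrow category is the comma category with a point as `X`, so
`|X_b| = Σ_{[x]} #(b ⟶ F x) / #Aut x`, and the formula follows from
`Σ_{[b]} #(b ⟶ u) · #(b ⟶ v) / #Aut b = #(u ⟶ v)` in the groupoid `B`, where only `[b] = [u]`
contributes.
-/

open MulAction

namespace IsoCls

variable {C : Type*} [Category C]

abbrev mk (c : C) : IsoCls C := Quotient.mk _ c

theorem mk_eq_mk_iff {a b : C} : mk a = mk b ↔ Nonempty (a ≅ b) := Quotient.eq

theorem mk_out (q : IsoCls C) : mk q.out = q := Quotient.out_eq q

theorem nonempty_out_mk_iso (c : C) : Nonempty ((mk c).out ≅ c) :=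
  mk_eq_mk_iff.mp (mk_out _)

end IsoCls

section Counting

variable {C : Type*} [Category C]

theorem CategoryTheory.Aut.finite_of_finite_hom (c : C) [Finite (c ⟶ c)] : Finite (Aut c) :=
  Finite.of_injective (fun e : Aut c => e.hom) fun _ _ h => Iso.ext h

theorem card_aut_congr {a b : C} (e : a ≅ b) : Nat.card (Aut a) = Nat.card (Aut b) :=
  Nat.card_congr e.conjAut.toEquiv

theorem card_hom_congr {a b c d : C} (e : a ≅ b) (e' : c ≅ d) :
    Nat.card (a ⟶ c) = Nat.card (b ⟶ d) :=
  Nat.card_congr ⟨fun f => e.inv ≫ f ≫ e'.hom, fun f => e.hom ≫ f ≫ e'.inv,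
    fun f => by simp, fun f => by simp⟩

theorem MulAction.finsum_inv_card_stabilizer (A S : Type*) [Group A] [MulAction A S] [Finite A]
    [Finite S] :
    ∑ᶠ ω : orbitRel.Quotient A S, (Nat.card (stabilizer A ω.out) : ℚ)⁻¹ =
      Nat.card S / Nat.card A := by
  have : Fintype (orbitRel.Quotient A S) := Fintype.ofFinite _
  have orbit_stabilizer (s : S) :
      (Nat.card (stabilizer A s) : ℚ)⁻¹ = Nat.card (orbit A s) / Nat.card A := by
    have : Nonempty (orbit A s) := ⟨⟨s, mem_orbit_self s⟩⟩
    rw [← Nat.card_congr (orbitProdStabilizerEquivGroup A s), Nat.card_prod, Nat.cast_mul,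
      div_mul_cancel_left₀ (Nat.cast_ne_zero.2 Nat.card_pos.ne')]
  rw [finsum_eq_sum_of_fintype, Nat.card_congr (selfEquivSigmaOrbits A S), Nat.card_sigma,
    Nat.cast_sum, Finset.sum_div]
  exact Finset.sum_congr rfl fun ω _ => orbit_stabilizer ω.out

end Counting

/-- Presents `π₀ C` as the disjoint union of the orbit sets `S i / A i`. -/
structure OrbitPresentation (C : Type*) [Category C] {ι : Type*} (A S : ι → Type*)
    [∀ i, Group (A i)] [∀ i, MulAction (A i) (S i)] where
  obj : ∀ i, S i → C
  exists_iso (c : C) : ∃ i s, Nonempty (obj i s ≅ c)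
  eq_of_iso {i j : ι} (s : S i) (t : S j) : Nonempty (obj i s ≅ obj j t) → i = j
  iso_iff {i : ι} (s t : S i) : Nonempty (obj i s ≅ obj i t) ↔ t ∈ orbit (A i) s

namespace OrbitPresentation

variable {C : Type*} [Category C] {ι : Type*} {A S : ι → Type*} [∀ i, Group (A i)]
  [∀ i, MulAction (A i) (S i)]

noncomputable def isoClsEquiv (P : OrbitPresentation C A S) :
    (Σ i, orbitRel.Quotient (A i) (S i)) ≃ IsoCls C :=
  Equiv.ofBijective
    (fun p => Quotient.lift (fun s => IsoCls.mk (P.obj p.1 s))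
      (fun s t hst => IsoCls.mk_eq_mk_iff.2 (((P.iso_iff t s).2 hst).map Iso.symm)) p.2)
    (by
      constructor
      · rintro ⟨i, ω⟩ ⟨j, ω'⟩ h
        induction ω using Quotient.inductionOn with | h s =>
        induction ω' using Quotient.inductionOn with | h t =>
        have hst := IsoCls.mk_eq_mk_iff.1 h
        obtain rfl := P.eq_of_iso s t hst
        exact congrArg (Sigma.mk i) (Quotient.sound ((P.iso_iff t s).1 (hst.map Iso.symm)))
      · intro c
        induction c using Quotient.inductionOn with | h c =>
        obtain ⟨i, s, hs⟩ := P.exists_iso c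
        exact ⟨⟨i, Quotient.mk _ s⟩, IsoCls.mk_eq_mk_iff.2 hs⟩)

theorem isoClsEquiv_mk (P : OrbitPresentation C A S) (i : ι) (s : S i) :
    P.isoClsEquiv ⟨i, Quotient.mk _ s⟩ = IsoCls.mk (P.obj i s) :=
  rfl

theorem finite_isoCls (P : OrbitPresentation C A S) [Finite ι] [∀ i, Finite (S i)] :
    Finite (IsoCls C) :=
  Finite.of_equiv _ P.isoClsEquiv

theorem gcard_eq (P : OrbitPresentation C A S) [Finite ι] [∀ i, Finite (A i)]
    [∀ i, Finite (S i)]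
    (card_aut : ∀ i s, Nat.card (Aut (P.obj i s)) = Nat.card (stabilizer (A i) s)) :
    gcard C = ∑ᶠ i, (Nat.card (S i) : ℚ) / Nat.card (A i) := by
  have : Fintype ι := Fintype.ofFinite _
  have : ∀ i, Fintype (orbitRel.Quotient (A i) (S i)) := fun _ => Fintype.ofFinite _
  have card_aut_out (p : Σ i, orbitRel.Quotient (A i) (S i)) :
      Nat.card (Aut (P.isoClsEquiv p).out) = Nat.card (stabilizer (A p.1) p.2.out) := by
    obtain ⟨i, ω⟩ := p
    rw [← Quotient.out_eq ω, isoClsEquiv_mk, Quotient.out_eq,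
      card_aut_congr (IsoCls.nonempty_out_mk_iso _).some, card_aut]
  rw [gcard, ← finsum_comp_equiv P.isoClsEquiv, finsum_eq_sum_of_fintype, finsum_eq_sum_of_fintype,
    Fintype.sum_sigma]
  refine Finset.sum_congr rfl fun i _ => ?_
  simp only [card_aut_out]
  rw [← finsum_inv_card_stabilizer, finsum_eq_sum_of_fintype]

end OrbitPresentation

namespace CategoryTheory.Comma

variable {X Y B : Type*} [Category X] [Category Y] [Category B] (F : X ⥤ B) (G : Y ⥤ B)

instance autProdAction (x : X) (y : Y) : MulAction (Aut x × Aut y) (F.obj x ⟶ G.obj y) where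
  smul a φ := F.map a.1.inv ≫ φ ≫ G.map a.2.hom
  one_smul φ := by
    change F.map (Iso.refl x).inv ≫ φ ≫ G.map (Iso.refl y).hom = φ
    simp
  mul_smul a b φ := by
    change F.map (b.1 ≪≫ a.1).inv ≫ φ ≫ G.map (b.2 ≪≫ a.2).hom =
      F.map a.1.inv ≫ (F.map b.1.inv ≫ φ ≫ G.map b.2.hom) ≫ G.map a.2.hom
    simp [Aut]

variable {F G} {x : X} {y : Y}

theorem smul_eq_iff (a : Aut x × Aut y) (φ ψ : F.obj x ⟶ G.obj y) :
    a • φ = ψ ↔ F.map a.1.hom ≫ ψ = φ ≫ G.map a.2.hom := by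
  change (F.mapIso a.1).inv ≫ φ ≫ G.map a.2.hom = ψ ↔ _
  rw [Iso.inv_comp_eq, eq_comm]
  rfl

def isoMkEquiv (φ ψ : F.obj x ⟶ G.obj y) :
    ((⟨x, y, φ⟩ : Comma F G) ≅ ⟨x, y, ψ⟩) ≃ {a : Aut x × Aut y // a • φ = ψ} where
  toFun e := ⟨((Comma.fst F G).mapIso e, (Comma.snd F G).mapIso e), (smul_eq_iff _ _ _).2 e.hom.w⟩
  invFun a := Comma.isoMk a.1.1 a.1.2 ((smul_eq_iff _ _ _).1 a.2)
  left_inv e := by ext <;> rfl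
  right_inv a := by ext <;> rfl

theorem nonempty_iso_mk_iff (φ ψ : F.obj x ⟶ G.obj y) :
    Nonempty ((⟨x, y, φ⟩ : Comma F G) ≅ ⟨x, y, ψ⟩) ↔ ψ ∈ orbit (Aut x × Aut y) φ := by
  rw [mem_orbit_iff, (isoMkEquiv φ ψ).nonempty_congr, nonempty_subtype]

theorem card_aut_mk (φ : F.obj x ⟶ G.obj y) :
    Nat.card (Aut (⟨x, y, φ⟩ : Comma F G)) = Nat.card (stabilizer (Aut x × Aut y) φ) :=
  Nat.card_congr <|
    (isoMkEquiv φ φ).trans (Equiv.subtypeEquivRight fun _ => mem_stabilizer_iff.symm)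

theorem finite_hom [∀ x x' : X, Finite (x ⟶ x')] [∀ y y' : Y, Finite (y ⟶ y')]
    (c c' : Comma F G) : Finite (c ⟶ c') :=
  Finite.of_injective (fun f : c ⟶ c' => (f.left, f.right)) fun f g h =>
    Comma.hom_ext f g (Prod.ext_iff.1 h).1 (Prod.ext_iff.1 h).2

variable (F G)

noncomputable def orbitPresentation :
    OrbitPresentation (Comma F G) (fun p : IsoCls X × IsoCls Y => Aut p.1.out × Aut p.2.out)
      (fun p => F.obj p.1.out ⟶ G.obj p.2.out) where
  obj p φ := ⟨p.1.out, p.2.out, φ⟩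
  exists_iso c := by
    obtain ⟨l⟩ := IsoCls.nonempty_out_mk_iso c.left
    obtain ⟨r⟩ := IsoCls.nonempty_out_mk_iso c.right
    exact ⟨(IsoCls.mk c.left, IsoCls.mk c.right), F.map l.hom ≫ c.hom ≫ G.map r.inv,
      ⟨Comma.isoMk l r⟩⟩
  eq_of_iso {p q} _ _ := fun ⟨e⟩ => Prod.ext
    (by
      rw [← IsoCls.mk_out p.1, ← IsoCls.mk_out q.1]
      exact IsoCls.mk_eq_mk_iff.2 ⟨(Comma.fst F G).mapIso e⟩)
    (by
      rw [← IsoCls.mk_out p.2, ← IsoCls.mk_out q.2]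
      exact IsoCls.mk_eq_mk_iff.2 ⟨(Comma.snd F G).mapIso e⟩)
  iso_iff := nonempty_iso_mk_iff

theorem finite_isoCls [∀ b b' : B, Finite (b ⟶ b')] [Finite (IsoCls X)] [Finite (IsoCls Y)] :
    Finite (IsoCls (Comma F G)) :=
  (orbitPresentation F G).finite_isoCls

theorem gcard_eq [∀ x x' : X, Finite (x ⟶ x')] [∀ y y' : Y, Finite (y ⟶ y')]
    [∀ b b' : B, Finite (b ⟶ b')] [Finite (IsoCls X)] [Finite (IsoCls Y)] :
    gcard (Comma F G) = ∑ᶠ p : IsoCls X × IsoCls Y,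
      (Nat.card (F.obj p.1.out ⟶ G.obj p.2.out) : ℚ) /
        (Nat.card (Aut p.1.out) * Nat.card (Aut p.2.out)) := by
  have (x : X) : Finite (Aut x) := Aut.finite_of_finite_hom x
  have (y : Y) : Finite (Aut y) := Aut.finite_of_finite_hom y
  simp only [(orbitPresentation F G).gcard_eq fun _ => card_aut_mk, Nat.card_prod, Nat.cast_mul]

end CategoryTheory.Comma

theorem CategoryTheory.StructuredArrow.gcard_eq {X B : Type*} [Category X] [Category B]
    [∀ x x' : X, Finite (x ⟶ x')] [∀ b b' : B, Finite (b ⟶ b')] [Finite (IsoCls X)]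
    (b : B) (F : X ⥤ B) :
    gcard (StructuredArrow b F) =
      ∑ᶠ x : IsoCls X, (Nat.card (b ⟶ F.obj x.out) : ℚ) / Nat.card (Aut x.out) := by
  have card_aut_point (u : Discrete PUnit.{1}) : Nat.card (Aut u) = 1 :=
    Nat.card_eq_one_iff_unique.2 ⟨⟨fun _ _ => Iso.ext (Subsingleton.elim _ _)⟩, ⟨1⟩⟩
  change gcard (Comma (Functor.fromPUnit.{0} b) F) = _
  rw [Comma.gcard_eq, finsum_curry _ (Set.toFinite _), finsum_unique]
  simp only [card_aut_point, Nat.cast_one, one_mul]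
  rfl

section Groupoid

variable {B : Type*} [Groupoid B]

theorem card_hom_out_eq_zero {c : IsoCls B} {u : B} (h : c ≠ IsoCls.mk u) :
    Nat.card (c.out ⟶ u) = 0 := by
  have : IsEmpty (c.out ⟶ u) := ⟨fun f => h <| by
    rw [← IsoCls.mk_out c]
    exact IsoCls.mk_eq_mk_iff.2 ⟨asIso f⟩⟩
  exact Nat.card_of_isEmpty

theorem hasFiniteSupport_of_card_hom_eq_zero {u : B} {f : IsoCls B → ℚ}
    (hf : ∀ c, Nat.card (c.out ⟶ u) = 0 → f c = 0) : f.HasFiniteSupport :=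
  (Set.finite_singleton (IsoCls.mk u)).subset fun c hc =>
    by_contra fun h => hc (hf c (card_hom_out_eq_zero h))

theorem finsum_card_hom_mul_card_hom_div_card_aut [∀ b b' : B, Finite (b ⟶ b')] (u v : B) :
    ∑ᶠ c : IsoCls B,
        (Nat.card (c.out ⟶ u) : ℚ) * Nat.card (c.out ⟶ v) / Nat.card (Aut c.out) =
      Nat.card (u ⟶ v) := by
  rw [finsum_eq_single _ (IsoCls.mk u) fun c hc => by simp [card_hom_out_eq_zero hc]]
  obtain ⟨e⟩ := IsoCls.nonempty_out_mk_iso u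
  have card_hom_u : Nat.card ((IsoCls.mk u).out ⟶ u) = Nat.card (Aut (IsoCls.mk u).out) := by
    rw [card_hom_congr (Iso.refl _) e.symm]
    exact (Nat.card_congr (Groupoid.isoEquivHom _ _)).symm
  have : Finite (Aut (IsoCls.mk u).out) := Aut.finite_of_finite_hom _
  rw [card_hom_u, card_hom_congr e (Iso.refl v),
    mul_div_cancel_left₀ _ (Nat.cast_ne_zero.2 Nat.card_pos.ne')]

end Groupoid

/-- Cardinality of homotopy pullbacks: for `B` locally finite, `X`, `Y` finite
groupoids and `F : X ⥤ B`, `G : Y ⥤ B`, the comma category `Comma F G` is a finite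
groupoid, with `|Comma F G| = Σ_{[b]} |X_b| · |Y_b| / #Aut(b)`. -/
theorem comma_finite_card {X Y B : Type*} [Groupoid X] [Groupoid Y] [Groupoid B]
    (hB : LocallyFiniteCat B) (hX : FiniteCat X) (hY : FiniteCat Y)
    (F : X ⥤ B) (G : Y ⥤ B) :
    (∀ (a b : Comma F G) (f : a ⟶ b), IsIso f) ∧
    FiniteCat (Comma F G) ∧
    gcard (Comma F G) =
      ∑ᶠ b : IsoCls B,
        gcard (StructuredArrow b.out F) * gcard (StructuredArrow b.out G) /
          (Nat.card (Aut b.out) : ℚ) := by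
  obtain ⟨_, _⟩ := hX
  obtain ⟨_, _⟩ := hY
  have : ∀ b b' : B, Finite (b ⟶ b') := hB
  refine ⟨fun _ _ f => (Comma.isoMk (asIso f.left) (asIso f.right) f.w).isIso_hom,
    ⟨Comma.finite_hom, Comma.finite_isoCls F G⟩, ?_⟩
  have := Fintype.ofFinite (IsoCls X)
  have := Fintype.ofFinite (IsoCls Y)
  calc gcard (Comma F G)
      = ∑ p : IsoCls X × IsoCls Y, (Nat.card (F.obj p.1.out ⟶ G.obj p.2.out) : ℚ) *
          (Nat.card (Aut p.1.out) * Nat.card (Aut p.2.out) : ℚ)⁻¹ := by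
        simp only [Comma.gcard_eq, finsum_eq_sum_of_fintype, div_eq_mul_inv]
    _ = ∑ p : IsoCls X × IsoCls Y, ∑ᶠ b : IsoCls B,
          (Nat.card (b.out ⟶ F.obj p.1.out) : ℚ) * Nat.card (b.out ⟶ G.obj p.2.out) /
            Nat.card (Aut b.out) * (Nat.card (Aut p.1.out) * Nat.card (Aut p.2.out) : ℚ)⁻¹ := by
        simp only [← finsum_mul, finsum_card_hom_mul_card_hom_div_card_aut]
    _ = _ := by
      rw [← finsum_sum_comm _ _ fun p _ =>
        hasFiniteSupport_of_card_hom_eq_zero (u := F.obj p.1.out) fun c hc => by simp [hc]]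
      refine finsum_congr fun b => ?_
      rw [StructuredArrow.gcard_eq, StructuredArrow.gcard_eq, finsum_eq_sum_of_fintype,
        finsum_eq_sum_of_fintype, Finset.sum_mul_sum, ← Finset.sum_product', Finset.sum_div]
      refine Finset.sum_congr rfl fun p _ => ?_
      ring
end

section
/- Let p : E ⥤ B be a functor of groupoids with B locally finite. (1) If every homotopy fibre (b ↓ p) is a finite groupoid, then E is locally finite. (2) If E is a finite groupoid, then every homotopy fibre (b ↓ p) is a finite groupoid. -/
/-!
A morphism `f : x ⟶ y` of `E` is the same as a morphism `(x, 𝟙) ⟶ (y, p f)` in the fibre over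
`p x`, so `x ⟶ y` is a finite union, indexed by the finite set `p x ⟶ p y`, of finite hom-sets of
that fibre. Conversely, hom-sets of `(b ↓ p)` embed into hom-sets of `E`, and every object
`(e, φ)` of `(b ↓ p)` is isomorphic to one with `e` a chosen representative of its isomorphism
class, which leaves only finitely many choices for `φ`.
-/

open CategoryTheory

namespace CategoryTheory.StructuredArrow

variable {C D : Type*} [Category C] [Category D] {b : D} {p : C ⥤ D}

lemma finite_hom_of_finite_hom_right {X Y : StructuredArrow b p} [Finite (X.right ⟶ Y.right)] :
    Finite (X ⟶ Y) :=
  Finite.of_injective (fun g : X ⟶ Y => g.right) fun _ _ h => StructuredArrow.hom_ext _ _ h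

lemma locallyFiniteCat (hC : LocallyFiniteCat C) : LocallyFiniteCat (StructuredArrow b p) :=
  fun X Y => have := hC X.right Y.right; finite_hom_of_finite_hom_right

lemma finite_fiber_map {x y : C} (ψ : p.obj x ⟶ p.obj y)
    [Finite (StructuredArrow.mk (𝟙 (p.obj x)) ⟶ StructuredArrow.mk (Y := y) ψ)] :
    Finite {f : x ⟶ y // p.map f = ψ} :=
  Finite.of_injective
    (fun f => (StructuredArrow.homMk f.1 (by simp [f.2]) :
      StructuredArrow.mk (𝟙 (p.obj x)) ⟶ StructuredArrow.mk (Y := y) ψ))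
    fun _ _ h => Subtype.ext (congrArg CommaMorphism.right h)

lemma exists_iso_mk_out (X : StructuredArrow b p) :
    ∃ φ : b ⟶ p.obj (⟦X.right⟧ : IsoCls C).out,
      Nonempty (StructuredArrow.mk φ ≅ X) := by
  obtain ⟨ι⟩ := _root_.Quotient.mk_out (s := isIsomorphicSetoid C) X.right
  exact ⟨X.hom ≫ p.map ι.inv, ⟨StructuredArrow.isoMk ι (by simp [← p.map_comp])⟩⟩

lemma finite_isoCls_s7 [Finite (IsoCls C)] (hp : ∀ c : C, Finite (b ⟶ p.obj c)) :
    Finite (IsoCls (StructuredArrow b p)) := by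
  have := fun c : IsoCls C => hp c.out
  refine Finite.of_surjective
    (fun s : Σ c : IsoCls C, (b ⟶ p.obj c.out) =>
      (⟦StructuredArrow.mk s.2⟧ : IsoCls (StructuredArrow b p))) ?_
  rintro ⟨X⟩
  obtain ⟨φ, ⟨ι⟩⟩ := exists_iso_mk_out X
  exact ⟨⟨_, φ⟩, _root_.Quotient.sound ⟨ι⟩⟩

end CategoryTheory.StructuredArrow

lemma CategoryTheory.Functor.locallyFiniteCat_of_structuredArrow {C D : Type*} [Category C]
    [Category D] (hD : LocallyFiniteCat D) (p : C ⥤ D)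
    (hfib : ∀ b : D, LocallyFiniteCat (StructuredArrow b p)) : LocallyFiniteCat C := by
  intro x y
  have := hD (p.obj x) (p.obj y)
  have := fun ψ : p.obj x ⟶ p.obj y => hfib (p.obj x) (StructuredArrow.mk (𝟙 _)) (.mk ψ)
  have := fun ψ : p.obj x ⟶ p.obj y => StructuredArrow.finite_fiber_map ψ
  exact Finite.of_equiv _ (Equiv.sigmaFiberEquiv p.map)

/-- For `p : E ⥤ B` with `B` locally finite: (1) if every homotopy fibre `(b ↓ p)` is
finite then `E` is locally finite; (2) if `E` is finite then every homotopy fibre is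
finite. -/
theorem finite_fibres_locally_finite {E B : Type*} [Groupoid E] [Groupoid B]
    (hB : LocallyFiniteCat B) (p : E ⥤ B) :
    ((∀ b : B, FiniteCat (StructuredArrow b p)) → LocallyFiniteCat E) ∧
    (FiniteCat E → ∀ b : B, FiniteCat (StructuredArrow b p)) := by
  refine ⟨fun hfib => p.locallyFiniteCat_of_structuredArrow hB fun b => (hfib b).1, ?_⟩
  rintro ⟨hE, hEcls⟩ b
  exact ⟨StructuredArrow.locallyFiniteCat hE,
    StructuredArrow.finite_isoCls_s7 fun c => hB b (p.obj c)⟩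
end

section
/- Let X and Y be finite groupoids. Then the functor category X ⥤ Y (whose morphisms are natural transformations, all of which are automatically isomorphisms since Y is a groupoid) is again a finite groupoid: there are only finitely many functors X ⥤ Y up to natural isomorphism, and for any two functors F, G : X ⥤ Y the set of natural transformations F → G is finite. -/
open CategoryTheory

/-!
Finiteness in the sense of `FiniteCat` is invariant under equivalence, and a finite category is
equivalent to its skeleton, which has finitely many objects. Between categories with finitely
many objects and finite hom-sets there are only finitely many functors, since a functor is
determined by its object map and its maps on hom-sets; and a natural transformation is
determined by its finitely many components. Hence `Skeleton X ⥤ Skeleton Y` is finite, and so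
is the equivalent category `X ⥤ Y`.
-/

namespace CategoryTheory

variable {C D : Type*} [Category C] [Category D]

lemma Functor.finite_hom_of_faithful (F : C ⥤ D) [F.Faithful] [∀ y z : D, Finite (y ⟶ z)]
    (a b : C) : Finite (a ⟶ b) :=
  Finite.of_injective F.map F.map_injective

instance Functor.finite [Finite C] [∀ a b : C, Finite (a ⟶ b)] [Finite D]
    [∀ y z : D, Finite (y ⟶ z)] : Finite (C ⥤ D) := by
  refine Finite.of_injective
    (fun F : C ⥤ D => (⟨F.obj, fun _ _ f => F.map f⟩ : Σ o : C → D, ∀ a b, (a ⟶ b) → (o a ⟶ o b)))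
    fun F G h => ?_
  obtain ⟨Fo, Fm, _, _⟩ := F
  obtain ⟨Go, Gm, _, _⟩ := G
  obtain ⟨rfl, hmap⟩ := Sigma.mk.inj h
  obtain rfl : @Fm = @Gm := eq_of_heq hmap
  rfl

instance NatTrans.finite [Finite C] [∀ y z : D, Finite (y ⟶ z)] (F G : C ⥤ D) :
    Finite (F ⟶ G) :=
  Finite.of_injective (fun α : F ⟶ G => α.app) fun _ _ => NatTrans.ext

end CategoryTheory

namespace FiniteCat

variable {C D : Type*} [Category C] [Category D]

lemma of_finite [Finite C] [∀ a b : C, Finite (a ⟶ b)] : FiniteCat C :=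
  ⟨fun _ _ => inferInstance, inferInstance⟩

-- `Skeleton C` is by definition the type `IsoCls C` of isomorphism classes.
lemma finite_skeleton (h : FiniteCat C) : Finite (Skeleton C) :=
  h.2

lemma finite_hom_skeleton (h : FiniteCat C) (a b : Skeleton C) : Finite (a ⟶ b) :=
  have := h.1
  (fromSkeleton C).finite_hom_of_faithful a b

lemma of_equivalence (e : C ≌ D) (h : FiniteCat C) : FiniteCat D :=
  have := h.1
  have := h.finite_skeleton
  ⟨e.inverse.finite_hom_of_faithful, (Finite.of_equiv _ e.skeletonEquiv : Finite (Skeleton D))⟩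

lemma functor (hC : FiniteCat C) (hD : FiniteCat D) : FiniteCat (C ⥤ D) :=
  have := hC.finite_skeleton
  have := hC.finite_hom_skeleton
  have := hD.finite_skeleton
  have := hD.finite_hom_skeleton
  of_equivalence ((skeletonEquivalence C).congrLeft.trans (skeletonEquivalence D).congrRight)
    of_finite

end FiniteCat

/-- For finite groupoids `X` and `Y`, the functor category `X ⥤ Y` is again a finite
groupoid: all natural transformations are isomorphisms, there are finitely many
functors up to natural isomorphism, and each set of natural transformations is
finite. -/
theorem functor_category_finite {X Y : Type*} [Groupoid X] [Groupoid Y]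
    (hX : FiniteCat X) (hY : FiniteCat Y) :
    (∀ (F G : X ⥤ Y) (α : F ⟶ G), IsIso α) ∧ FiniteCat (X ⥤ Y) :=
  ⟨fun _ _ α => NatIso.isIso_of_isIso_app α, hX.functor hY⟩
end

section
/- Let S and T be locally finite groupoids, M a groupoid, and P : M ⥤ S, Q : M ⥤ T functors such that every homotopy fibre (s ↓ P) of P is a finite groupoid. Then for every object s of S: each double homotopy fibre M_{(s,t)}, i.e. the homotopy fibre of the functor (P,Q) : M ⥤ S × T over the object (s,t), is a finite groupoid, and M_{(s,t)} is nonempty for only finitely many isomorphism classes [t] of objects of T. -/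
/-!
The double fibre `M_{(s,t)}` is the homotopy fibre over `t` of the composite `M_s ⥤ M ⥤ T`, where
`M_s = (s ↓ P)` is finite. For a finite `C` and `F : C ⥤ T` into a locally finite `T`, each
`(t ↓ F)` is finite: its morphisms are morphisms of `C`, and an object `(c, t ⟶ F c)` is determined
up to isomorphism by the class of `c` together with a morphism from `t` to `F` of a fixed
representative of that class. As `T` is a groupoid, `(t ↓ F)` is nonempty only if `t ≅ F c` for
some `c`, which leaves finitely many classes `[t]`.
-/

open CategoryTheory

attribute [local instance] isIsomorphicSetoid

def CategoryTheory.StructuredArrow.prod'Equivalence {S T M : Type*} [Category S] [Category T]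
    [Category M] (P : M ⥤ S) (Q : M ⥤ T) (s : S) (t : T) :
    StructuredArrow (s, t) (P.prod' Q) ≌ StructuredArrow t (proj s P ⋙ Q) where
  functor :=
    { obj X := mk (Y := mk (Y := X.right) X.hom.1) X.hom.2
      map f := homMk (homMk f.right (congrArg (·.1) (w f))) (congrArg (·.2) (w f)) }
  inverse :=
    { obj X := mk (Y := X.right.right) (X.right.hom, X.hom)
      map f := homMk f.right.right (Prod.ext (w f.right) (w f)) }
  -- Both composites are the identity up to structure eta.
  unitIso := NatIso.ofComponents Iso.refl
  counitIso := NatIso.ofComponents Iso.refl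
  functor_unitIso_comp _ := Category.comp_id _

theorem FiniteCat.of_equivalence_s10 {C D : Type*} [Category C] [Category D] (hC : FiniteCat C)
    (e : C ≌ D) : FiniteCat D := by
  refine ⟨fun X Y => ?_, ?_⟩
  · have := hC.1 (e.inverse.obj X) (e.inverse.obj Y)
    exact Finite.of_equiv _ e.fullyFaithfulInverse.homEquiv.symm
  · have := hC.2
    refine Finite.of_surjective
      (Quotient.map e.functor.obj fun _ _ => Nonempty.map e.functor.mapIso) ?_
    rintro ⟨Y⟩
    exact ⟨⟦e.inverse.obj Y⟧, Quotient.sound ⟨e.counitIso.app Y⟩⟩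

theorem FiniteCat.structuredArrow {C T : Type*} [Category C] [Category T] {F : C ⥤ T}
    (hC : FiniteCat C) (hT : LocallyFiniteCat T) (t : T) :
    FiniteCat (StructuredArrow t F) := by
  refine ⟨fun X Y => ?_, ?_⟩
  · have := hC.1 X.right Y.right
    exact Finite.of_injective (fun f => f.right) fun f g => StructuredArrow.ext f g
  · have := hC.2
    have (c : IsoCls C) := hT t (F.obj c.out)
    refine Finite.of_surjective (fun p : Σ c : IsoCls C, (t ⟶ F.obj c.out) =>
      (⟦StructuredArrow.mk p.2⟧ : IsoCls (StructuredArrow t F))) ?_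
    rintro ⟨X⟩
    obtain ⟨e⟩ : (⟦X.right⟧ : IsoCls C).out ≈ X.right := Quotient.mk_out _
    exact ⟨⟨_, X.hom ≫ F.map e.inv⟩, Quotient.sound ⟨StructuredArrow.isoMk e (by simp)⟩⟩

theorem finite_setOf_nonempty_structuredArrow {C T : Type*} [Category C] [Groupoid T]
    (F : C ⥤ T) (hC : Finite (IsoCls C)) :
    {t : IsoCls T | Nonempty (StructuredArrow t.out F)}.Finite := by
  refine (Set.finite_range fun c : IsoCls C => (⟦F.obj c.out⟧ : IsoCls T)).subset ?_
  rintro t ⟨X⟩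
  obtain ⟨e⟩ : (⟦X.right⟧ : IsoCls C).out ≈ X.right := Quotient.mk_out _
  have hX : F.obj (⟦X.right⟧ : IsoCls C).out ≈ t.out := ⟨F.mapIso e ≪≫ (asIso X.hom).symm⟩
  exact ⟨⟦X.right⟧, (Quotient.sound hX).trans t.out_eq⟩

theorem double_fibres_column_finite_general {S T M : Type*} [Groupoid S] [Groupoid T] [Groupoid M]
    (hT : LocallyFiniteCat T)
    (P : M ⥤ S) (Q : M ⥤ T)
    (hP : ∀ s : S, FiniteCat (StructuredArrow s P)) (s : S) :
    (∀ t : T, FiniteCat (StructuredArrow (s, t) (P.prod' Q))) ∧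
    {t : IsoCls T | Nonempty (StructuredArrow (s, t.out) (P.prod' Q))}.Finite :=
  ⟨fun t => ((hP s).structuredArrow hT t).of_equivalence_s10
      (StructuredArrow.prod'Equivalence P Q s t).symm,
    (finite_setOf_nonempty_structuredArrow _ (hP s).2).subset fun t ⟨X⟩ =>
      ⟨(StructuredArrow.prod'Equivalence P Q s t.out).functor.obj X⟩⟩

/-- For a finite-type span of groupoids `S ⟵ M ⟶ T` (every homotopy fibre of
`P : M ⥤ S` finite) with `S`, `T` locally finite: for every `s`, all double homotopy
fibres `M_{(s,t)}` are finite, and they are nonempty for only finitely many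
isomorphism classes `[t]` of `T`. -/
theorem double_fibres_column_finite {S T M : Type*} [Groupoid S] [Groupoid T] [Groupoid M]
    (hS : LocallyFiniteCat S) (hT : LocallyFiniteCat T)
    (P : M ⥤ S) (Q : M ⥤ T)
    (hP : ∀ s : S, FiniteCat (StructuredArrow s P)) (s : S) :
    (∀ t : T, FiniteCat (StructuredArrow (s, t) (P.prod' Q))) ∧
    {t : IsoCls T | Nonempty (StructuredArrow (s, t.out) (P.prod' Q))}.Finite :=
  double_fibres_column_finite_general hT P Q hP s
end

section
/- Let S and T be types, and equip ℚ^T = (T → ℚ) and ℚ^S = (S → ℚ) with the product topologies in which ℚ carries the discrete topology. A ℚ-linear map L : ℚ^T → ℚ^S is continuous if and only if there exists a column-finite matrix A : T → S → ℚ (for every s the set {t | A t s ≠ 0} is finite) such that for all w ∈ ℚ^T and all s ∈ S, (L w) s = Σ_{t : A t s ≠ 0} w t · A t s. -/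
/-! A continuous map into a discrete space is locally constant, and a neighbourhood of `0` in a
product constrains only finitely many coordinates; so each coordinate `w ↦ L w s` of a continuous
`L` vanishes on all `w` that vanish on some finite set, and linearity makes it the finite sum
`∑ t, w t * L (Pi.single t 1) s` over that set. -/

/-- The product topology on `X → ℚ` where `ℚ` carries the discrete topology. -/
def prodDiscreteTopology (X : Type*) : TopologicalSpace (X → ℚ) :=
  @Pi.topologicalSpace X (fun _ => ℚ) (fun _ => ⊥)

theorem Continuous.exists_finset_forall_eq {ι Y : Type*} {X : ι → Type*}
    [∀ i, TopologicalSpace (X i)] [TopologicalSpace Y] [DiscreteTopology Y]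
    {f : (∀ i, X i) → Y} (hf : Continuous f) (x : ∀ i, X i) :
    ∃ I : Finset ι, ∀ w, (∀ i ∈ I, w i = x i) → f w = f x := by
  obtain ⟨I, u, hxu, hsub⟩ :=
    isOpen_pi_iff.mp (hf.isOpen_preimage {f x} (isOpen_discrete _)) x rfl
  exact ⟨I, fun w hw => hsub fun i hi => hw i hi ▸ (hxu i hi).2⟩

namespace LinearMap

variable {R M T : Type*} [Semiring R] [AddCommMonoid M] [Module R M] [DecidableEq T]

theorem apply_eq_sum_smul_single_of_forall_eq_zero (f : (T → R) →ₗ[R] M) {F : Finset T}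
    (hf : ∀ w, (∀ t ∈ F, w t = 0) → f w = 0) (w : T → R) :
    f w = ∑ t ∈ F, w t • f (Pi.single t 1) :=
  calc f w = f (F.piecewise (0 : T → R) w + ∑ t ∈ F, w t • Pi.single t 1) := by
        congr 1
        ext t
        by_cases ht : t ∈ F <;> simp [ht, Pi.single_apply]
    _ = ∑ t ∈ F, w t • f (Pi.single t 1) := by
      rw [map_add, hf _ fun t ht => by simp [ht], zero_add, map_sum]
      simp only [map_smul]

variable [TopologicalSpace R] [TopologicalSpace M] [DiscreteTopology M]

theorem exists_finset_eq_sum_smul_single_of_continuous (f : (T → R) →ₗ[R] M)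
    (hf : Continuous f) : ∃ F : Finset T, ∀ w, f w = ∑ t ∈ F, w t • f (Pi.single t 1) := by
  obtain ⟨F, hF⟩ := hf.exists_finset_forall_eq 0
  exact ⟨F, f.apply_eq_sum_smul_single_of_forall_eq_zero fun w hw => by simpa using hF w hw⟩

theorem exists_finite_support_eq_sum_smul_single_of_continuous (f : (T → R) →ₗ[R] M)
    (hf : Continuous f) :
    ∃ hfin : {t | f (Pi.single t 1) ≠ 0}.Finite,
      ∀ w, f w = ∑ t ∈ hfin.toFinset, w t • f (Pi.single t 1) := by
  obtain ⟨F, hF⟩ := f.exists_finset_eq_sum_smul_single_of_continuous hf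
  have hsupp : {t | f (Pi.single t 1) ≠ 0} ⊆ F := fun t ht => Finset.mem_coe.2 <| by
    by_contra htF
    exact ht (by simpa [Pi.single_apply, htF] using hF (Pi.single t 1))
  have hfin : {t | f (Pi.single t 1) ≠ 0}.Finite := F.finite_toSet.subset hsupp
  refine ⟨hfin, fun w => (hF w).trans (Finset.sum_subset ?_ fun t _ ht => ?_).symm⟩
  · exact fun t ht => hsupp (hfin.mem_toFinset.1 ht)
  · rw [hfin.mem_toFinset, Set.mem_ofPred_eq, not_not] at ht
    rw [ht, smul_zero]

end LinearMap

/-- A `ℚ`-linear map `ℚ^T → ℚ^S` is continuous for the product topologies (with `ℚ`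
discrete) if and only if it is given by multiplication by a column-finite matrix:
`(L w) s = Σ_{t : A t s ≠ 0} w t · A t s`. -/
theorem continuous_iff_columnFinite_matrix {S T : Type*}
    (L : (T → ℚ) →ₗ[ℚ] (S → ℚ)) :
    @Continuous (T → ℚ) (S → ℚ) (prodDiscreteTopology T) (prodDiscreteTopology S) L ↔
      ∃ (A : T → S → ℚ) (hA : ∀ s, {t | A t s ≠ 0}.Finite),
        ∀ (w : T → ℚ) (s : S), L w s = ∑ t ∈ (hA s).toFinset, w t * A t s := by
  classical
  let _ : TopologicalSpace ℚ := ⊥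
  have _ : DiscreteTopology ℚ := ⟨rfl⟩
  change Continuous L ↔ _
  constructor
  · intro hL
    choose hA hcol using fun s => ((LinearMap.proj s).comp L)
      |>.exists_finite_support_eq_sum_smul_single_of_continuous ((continuous_apply s).comp hL)
    exact ⟨fun t s => L (Pi.single t 1) s, hA, fun w s => hcol s w⟩
  · rintro ⟨A, hA, hL⟩
    refine continuous_pi fun s => ?_
    simp_rw [hL]
    exact continuous_finsetSum _ fun t _ => (continuous_apply t).mul continuous_const
end
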